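/- arXiv:2408.05443 — 3 statements merged into one kernel-verified Lean document; each statement's English description precedes it below -/
import Mathlib

section
/- For every 0 < α ≤ β and every T ∈ [α, β], min{C(α), C(β)} ≤ ((α + β)/(αβ/T + T))·C(T). -/
theorem stmt_4 (K H : ℝ) (hK : 0 < K) (hH : 0 < H)
    (α β T : ℝ) (hα : 0 < α) (hαβ : α ≤ β) (hT : T ∈ Set.Icc α β) :
    min (K / α + H * α) (K / β + H * β) ≤
      ((α + β) / (α * β / T + T)) * (K / T + H * T) := by
  obtain ⟨hT1, hT2⟩ := hT
  have hTpos : 0 < T := lt_of_lt_of_le hα hT1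
  have hβ : 0 < β := lt_of_lt_of_le hα hαβ
  have hden : 0 < α * β + T ^ 2 := by positivity
  have heq : ((α + β) / (α * β / T + T)) * (K / T + H * T)
      = (α + β) * (K + H * T ^ 2) / (α * β + T ^ 2) := by
    field_simp
  rw [heq]
  rcases le_total (H * (α * β)) K with h | h
  · refine le_trans (min_le_right _ _) ?_
    rw [le_div_iff₀ hden]
    have hKβ : K / β * β = K := div_mul_cancel₀ K hβ.ne'
    have h1 : (0:ℝ) ≤ (β ^ 2 - T ^ 2) * (K - H * (α * β)) :=
      mul_nonneg (by nlinarith) (by linarith)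
    nlinarith [mul_pos hβ hTpos, sq_nonneg (β - T)]
  · refine le_trans (min_le_left _ _) ?_
    rw [le_div_iff₀ hden]
    have hKα : K / α * α = K := div_mul_cancel₀ K hα.ne'
    have h1 : (0:ℝ) ≤ (T ^ 2 - α ^ 2) * (H * (α * β) - K) :=
      mul_nonneg (by nlinarith) (by linarith)
    nlinarith [mul_pos hα hTpos, sq_nonneg (α - T)]
end

section
/- Let a, b > 0 with b < 3a, and suppose b is not an integer multiple of a but the least common multiple L of a and b (the smallest positive number that is an integer multiple of both) satisfies L = 2b. Then 1/a + 1/b − 1/L ≥ (6/5)·(1/a). -/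
/-! Since `2 * b = L` is a natural multiple of `a` below `6 * a`, in fact `2 * b ≤ 5 * a`,
and then `1/a + 1/b - 1/(2b) = 1/a + 1/(2b) ≥ 1/a + 1/(5a)`. -/

theorem natCast_mul_le_of_lt_succ_mul {α : Type*} [Semiring α] [LinearOrder α]
    [IsStrictOrderedRing α] {a : α} (ha : 0 ≤ a) {n k : ℕ} (h : n * a < (k + 1) * a) :
    n * a ≤ k * a := by
  have hnk : n < k + 1 := by exact_mod_cast lt_of_mul_lt_mul_right h ha
  exact mul_le_mul_of_nonneg_right (by exact_mod_cast Nat.le_of_lt_succ hnk) ha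

theorem six_fifths_mul_one_div_le {K : Type*} [Field K] [LinearOrder K] [IsStrictOrderedRing K]
    {a b : K} (hb : 0 < b) (hba : 2 * b ≤ 5 * a) :
    6 / 5 * (1 / a) ≤ 1 / a + 1 / b - 1 / (2 * b) := by
  have hfifth : 1 / (5 * a) ≤ 1 / (2 * b) := one_div_le_one_div_of_le (by positivity) hba
  have ha : a ≠ 0 := by rintro rfl; linarith
  calc 6 / 5 * (1 / a) = 1 / a + 1 / (5 * a) := by field_simp; ring
    _ ≤ 1 / a + 1 / (2 * b) := by gcongr
    _ = 1 / a + 1 / b - 1 / (2 * b) := by field_simp; ring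

theorem stmt_12_general (a b L : ℝ) (ha : 0 < a) (hb : 0 < b) (hb3 : b < 3 * a)
    (hLa : ∃ n : ℕ, L = n * a)
    (hL2b : L = 2 * b) :
    1 / a + 1 / b - 1 / L ≥ (6 / 5) * (1 / a) := by
  obtain ⟨n, hn⟩ := hLa
  have h2b : 2 * b ≤ 5 * a := by
    have := natCast_mul_le_of_lt_succ_mul ha.le (k := 5) (n := n) (by push_cast; linarith)
    push_cast at this
    linarith
  rw [hL2b]
  exact six_fifths_mul_one_div_le hb h2b

theorem stmt_12 (a b L : ℝ) (ha : 0 < a) (hb : 0 < b) (hb3 : b < 3 * a)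
    (hfrac : ¬ ∃ n : ℕ, b = n * a)
    (hL : 0 < L)
    (hLa : ∃ n : ℕ, L = n * a) (hLb : ∃ n : ℕ, L = n * b)
    (hmin : ∀ M : ℝ, 0 < M → (∃ n : ℕ, M = n * a) → (∃ n : ℕ, M = n * b) → L ≤ M)
    (hL2b : L = 2 * b) :
    1 / a + 1 / b - 1 / L ≥ (6 / 5) * (1 / a) :=
  stmt_12_general a b L ha hb hb3 hLa hL2b
end

section
/- Let θ ∈ [1, 3/2], let U be uniform on [0, ln 2], and define Y = (2/(θ·e^U)) if U ≤ ln(2/θ), and Y = (3/(θ·e^U)) if U > ln(2/θ). Then E[Y] = (1/(2·ln 2))·(1 + 1/θ). -/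
/-! Split the integral at `c = log (2 / θ)`, where `exp (-c) = θ / 2`: it equals
`(2 / θ) (1 - θ / 2) + (3 / θ) (θ / 2 - 1 / 2) = (1 + 1 / θ) / 2`. -/

open MeasureTheory Real Set intervalIntegral
open scoped Interval

theorem intervalIntegral.integral_ite_le_eq_add {E : Type*} [NormedAddCommGroup E]
    [NormedSpace ℝ E] {f g : ℝ → E} {a b c : ℝ} (hac : a ≤ c) (hcb : c ≤ b)
    (hf : IntervalIntegrable f volume a c) (hg : IntervalIntegrable g volume c b) :
    ∫ u in a..b, (if u ≤ c then f u else g u) = (∫ u in a..c, f u) + ∫ u in c..b, g u := by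
  have hleft : EqOn (fun u => if u ≤ c then f u else g u) f (Ι a c) := fun u hu =>
    if_pos (uIoc_of_le hac ▸ hu).2
  have hright : EqOn (fun u => if u ≤ c then f u else g u) g (Ι c b) := fun u hu =>
    if_neg (not_le.2 (uIoc_of_le hcb ▸ hu).1)
  rw [← integral_add_adjacent_intervals ((intervalIntegrable_congr hleft).2 hf)
      ((intervalIntegrable_congr hright).2 hg),
    integral_congr_ae (ae_of_all _ hleft), integral_congr_ae (ae_of_all _ hright)]

theorem intervalIntegral.integral_exp_neg (a b : ℝ) :
    ∫ u in a..b, exp (-u) = exp (-a) - exp (-b) := by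
  rw [integral_comp_neg (fun u => exp u), integral_exp]

theorem Real.div_mul_exp_eq_mul_exp_neg (k θ u : ℝ) : k / (θ * exp u) = k / θ * exp (-u) := by
  rw [exp_neg, div_mul_eq_div_div, div_eq_mul_inv _ (exp u)]

theorem intervalIntegrable_div_mul_exp (k θ a b : ℝ) :
    IntervalIntegrable (fun u => k / (θ * exp u)) volume a b := by
  simp_rw [div_mul_exp_eq_mul_exp_neg]
  exact Continuous.intervalIntegrable (by fun_prop) a b

theorem intervalIntegral.integral_div_mul_exp (k θ a b : ℝ) :
    ∫ u in a..b, k / (θ * exp u) = k / θ * (exp (-a) - exp (-b)) := by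
  simp_rw [div_mul_exp_eq_mul_exp_neg]
  rw [integral_const_mul, integral_exp_neg]

theorem stmt_15 (θ : ℝ) (hθ : θ ∈ Set.Icc (1:ℝ) (3 / 2)) :
    (∫ u in (0:ℝ)..(Real.log 2),
        if u ≤ Real.log (2 / θ) then 2 / (θ * Real.exp u) else 3 / (θ * Real.exp u)) /
        Real.log 2 =
      (1 / (2 * Real.log 2)) * (1 + 1 / θ) := by
  obtain ⟨hθ1, hθ2⟩ := hθ
  have hθ0 : 0 < θ := by linarith
  have hc0 : 0 ≤ log (2 / θ) := log_nonneg (by rw [le_div_iff₀ hθ0]; linarith)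
  have hc2 : log (2 / θ) ≤ log 2 := log_le_log (by positivity) (div_le_self zero_le_two hθ1)
  rw [integral_ite_le_eq_add hc0 hc2 (intervalIntegrable_div_mul_exp ..)
      (intervalIntegrable_div_mul_exp ..), integral_div_mul_exp, integral_div_mul_exp,
    neg_zero, exp_zero, exp_neg, exp_neg, exp_log (by positivity), exp_log two_pos]
  have hlog2 : log 2 ≠ 0 := (log_pos one_lt_two).ne'
  field_simp
  ring
end
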